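/- For every β ∈ ℂ with Re β ≥ 0, the product L↓_β L↑_β is a compact operator on H^∞(Π). -/

import Mathlib

/-!
On `f`, `L↓_β L↑_β` acts as `z ↦ w(z) f(φ(z))` with `φ(z) = (1+z)/(2+z)` and weight
`w(z) = (2+z)^(-2β)`, the image of the constant function `1` (hence bounded). The symbol `φ`
maps `Π` into the closed disc `K = B̄(3/4, 1/4)`, a compact subset of `Π`. By Cauchy's estimate
the restrictions to `K` of the unit ball of `H^∞(Π)` are uniformly Lipschitz, so by
Arzelà–Ascoli restriction to `K` is a compact operator into `C_b(K)`. Composing with the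
continuous map `g ↦ w · (g ∘ φ)` and using that `H^∞(Π)` is closed in `C_b(Π)` gives
compactness.
-/

open Complex BoundedContinuousFunction
open scoped ENNReal

/-- The open right half-plane `Π = {z : ℂ | 0 < Re z}`. -/
def RHP : Set ℂ := {z : ℂ | 0 < z.re}

/-- Extension of a bounded continuous function on `Π` to `ℂ` (by zero off `Π`). -/
noncomputable def extFun (f : ↥RHP →ᵇ ℂ) : ℂ → ℂ :=
  fun z => if h : 0 < z.re then f ⟨z, h⟩ else 0

/-- `H^∞(Π)`: the space of bounded holomorphic functions on `Π`, realised as the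
submodule of the Banach space of bounded continuous functions on `Π` (with the
supremum norm) consisting of the holomorphic ones. -/
noncomputable def Hinf : Submodule ℂ (↥RHP →ᵇ ℂ) where
  carrier := {f | DifferentiableOn ℂ (extFun f) RHP}
  add_mem' := by
    intro f g hf hg
    refine (DifferentiableOn.add hf hg).congr (fun z hz => ?_)
    have hz' : 0 < z.re := hz
    simp only [extFun]
    first
      | (simp only [Pi.add_apply, dif_pos hz']; rfl)
      | simp [extFun, hz']
  zero_mem' := by
    refine (differentiableOn_const 0).congr (fun z hz => ?_)
    have hz' : 0 < z.re := hz
    simp only [extFun]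
    rw [dif_pos hz']
    rfl
  smul_mem' := by
    intro c f hf
    refine (hf.const_smul c).congr (fun z hz => ?_)
    have hz' : 0 < z.re := hz
    simp only [extFun]
    first
      | (simp only [Pi.smul_apply, dif_pos hz']; rfl)
      | simp [extFun, hz']

lemma mem_shift (z : ↥RHP) : (1 : ℂ) + z.1 ∈ RHP := by
  have hz := z.2
  simp only [RHP, Set.mem_setOf_eq, Complex.add_re, Complex.one_re] at *
  linarith

lemma mem_div (z : ↥RHP) : z.1 / (1 + z.1) ∈ RHP := by
  have hz := z.2
  simp only [RHP, Set.mem_setOf_eq] at hz ⊢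
  have hw : (1 + z.1) ≠ 0 := by
    intro h
    have h2 : (1 + z.1).re = 0 := by rw [h]; simp
    simp only [Complex.add_re, Complex.one_re] at h2
    linarith
  have hns : 0 < Complex.normSq (1 + z.1) := Complex.normSq_pos.mpr hw
  rw [Complex.div_re]
  have h1 : 0 < z.1.re * (1 + z.1).re := by
    simp only [Complex.add_re, Complex.one_re]
    nlinarith
  have h2 : 0 ≤ z.1.im * (1 + z.1).im := by
    simp only [Complex.add_im, Complex.one_im, zero_add]
    nlinarith [sq_nonneg z.1.im]
  have := div_pos h1 hns
  have := div_nonneg h2 hns.le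
  linarith

/-- Pointwise characterisation of the transfer operator
`(L↑_β f)(z) = (1+z)^(-2β) f(z/(1+z))` on `H^∞(Π)` (principal branch power). -/
def IsLup (β : ℂ) (T : ↥Hinf →L[ℂ] ↥Hinf) : Prop :=
  ∀ f : ↥Hinf, ∀ z : ↥RHP,
    (T f).1 z = (1 + z.1) ^ (-(2 * β)) * f.1 ⟨z.1 / (1 + z.1), mem_div z⟩

/-- Pointwise characterisation of the transfer operator `(L↓ f)(z) = f(1+z)` on `H^∞(Π)`. -/
def IsLdn (T : ↥Hinf →L[ℂ] ↥Hinf) : Prop :=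
  ∀ f : ↥Hinf, ∀ z : ↥RHP, (T f).1 z = f.1 ⟨1 + z.1, mem_shift z⟩


open Metric

lemma isOpen_RHP : IsOpen RHP := isOpen_lt continuous_const Complex.continuous_re

lemma closedBall_subset_RHP {c : ℂ} {r : ℝ} (h : r < c.re) : closedBall c r ⊆ RHP := by
  intro z hz
  have h1 := neg_abs_le (z - c).re
  have h2 := Complex.abs_re_le_norm (z - c)
  rw [mem_closedBall, dist_eq_norm] at hz
  rw [Complex.sub_re] at h1 h2
  show 0 < z.re
  linarith

lemma extFun_apply (f : ↥RHP →ᵇ ℂ) {z : ℂ} (hz : 0 < z.re) : extFun f z = f ⟨z, hz⟩ :=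
  dif_pos hz

lemma norm_extFun_le (f : ↥RHP →ᵇ ℂ) (z : ℂ) : ‖extFun f z‖ ≤ ‖f‖ := by
  by_cases hz : 0 < z.re
  · rw [extFun_apply f hz]
    exact f.norm_coe_le_norm _
  · simp [extFun, hz]

lemma one_mem_Hinf : (1 : ↥RHP →ᵇ ℂ) ∈ Hinf :=
  (differentiableOn_const 1).congr fun _ hz => extFun_apply 1 hz

lemma isClosed_Hinf : IsClosed (Hinf : Set (↥RHP →ᵇ ℂ)) := by
  refine IsSeqClosed.isClosed fun g f hg hgf => ?_
  have hunif : TendstoUniformlyOn (fun n => extFun (g n)) (extFun f) Filter.atTop RHP := by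
    rw [Metric.tendstoUniformlyOn_iff]
    intro ε hε
    filter_upwards [Metric.tendsto_nhds.mp hgf ε hε] with n hn z hz
    rw [extFun_apply f hz, extFun_apply (g n) hz]
    exact (dist_coe_le_dist _).trans_lt (dist_comm f (g n) ▸ hn)
  exact hunif.tendstoLocallyUniformlyOn.differentiableOn (Filter.Eventually.of_forall hg)
    isOpen_RHP

/-- Cauchy's estimate for the derivative, integrated along segments. -/
theorem norm_sub_le_of_differentiableOn_closedBall {E : Type*} [NormedAddCommGroup E]
    [NormedSpace ℂ E] {f : ℂ → E} {c x y : ℂ} {r δ C : ℝ} (hδ : 0 < δ)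
    (hf : DifferentiableOn ℂ f (closedBall c (r + δ)))
    (hC : ∀ z ∈ closedBall c (r + δ), ‖f z‖ ≤ C)
    (hx : x ∈ closedBall c r) (hy : y ∈ closedBall c r) :
    ‖f x - f y‖ ≤ C / δ * ‖x - y‖ := by
  have hsub : ∀ w ∈ closedBall c r, closedBall w δ ⊆ closedBall c (r + δ) := fun w hw =>
    closedBall_subset_closedBall' (by rw [mem_closedBall] at hw; linarith)
  refine (convex_closedBall c r).norm_image_sub_le_of_norm_deriv_le (fun w hw => ?_)
    (fun w hw => ?_) hy hx
  · exact hf.differentiableAt (Filter.mem_of_superset (closedBall_mem_nhds w hδ) (hsub w hw))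
  · have hd : DiffContOnCl ℂ f (ball w δ) :=
      (hf.mono ((closure_ball w hδ.ne').subset.trans (hsub w hw))).diffContOnCl
    exact Complex.norm_deriv_le_of_forall_mem_sphere_norm_le hδ hd fun z hz =>
      hC z (hsub w hw (sphere_subset_closedBall hz))

theorem isCompactOperator_restrict_closedBall {c : ℂ} {r : ℝ} (hr : r < c.re) :
    IsCompactOperator fun f : Hinf =>
      (f : ↥RHP →ᵇ ℂ).compContinuous (ContinuousMap.inclusion (closedBall_subset_RHP hr)) := by
  obtain ⟨δ, hδ, hrδ⟩ : ∃ δ > 0, r + δ < c.re := ⟨(c.re - r) / 2, by linarith, by linarith⟩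
  have hK : closedBall c (r + δ) ⊆ RHP := closedBall_subset_RHP hrδ
  have : CompactSpace (closedBall c r) := isCompact_iff_compactSpace.mp (isCompact_closedBall c r)
  rw [isCompactOperator_iff_exists_mem_nhds_isCompact_closure_image]
  refine ⟨ball 0 1, ball_mem_nhds 0 one_pos,
    arzela_ascoli (closedBall 0 1) (isCompact_closedBall 0 1) _ ?_ ?_⟩
  · rintro _ x ⟨f, hf, rfl⟩
    rw [mem_ball_zero_iff] at hf
    exact mem_closedBall_zero_iff.mpr ((norm_coe_le_norm (f : ↥RHP →ᵇ ℂ) _).trans hf.le)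
  · refine equicontinuous_of_continuity_modulus (fun t => 1 / δ * t) ?_ _ ?_
    · simpa using (continuous_const_mul (1 / δ)).tendsto 0
    · rintro x y ⟨_, f, hf, rfl⟩
      rw [mem_ball_zero_iff] at hf
      have := norm_sub_le_of_differentiableOn_closedBall hδ (f.2.mono hK)
        (fun z _ => (norm_extFun_le _ z).trans hf.le) x.2 y.2
      rwa [extFun_apply _ (closedBall_subset_RHP hr x.2),
        extFun_apply _ (closedBall_subset_RHP hr y.2), ← dist_eq_norm, ← dist_eq_norm] at this

theorem isCompactOperator_of_eq_mul_comp (T : Hinf → Hinf) (w : ↥RHP →ᵇ ℂ) {φ : RHP → RHP}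
    (hφ : Continuous φ) {c : ℂ} {r : ℝ} (hr : r < c.re) (hφr : ∀ z, (φ z : ℂ) ∈ closedBall c r)
    (hT : ∀ f z, (T f : ↥RHP →ᵇ ℂ) z = w z * (f : ↥RHP →ᵇ ℂ) (φ z)) :
    IsCompactOperator T := by
  let φr : C(RHP, closedBall c r) :=
    ⟨fun z => ⟨φ z, hφr z⟩, (continuous_subtype_val.comp hφ).subtype_mk _⟩
  let Ψ : (closedBall c r →ᵇ ℂ) → (↥RHP →ᵇ ℂ) := fun g => w * g.compContinuous φr
  have hΨ : Continuous Ψ := continuous_const.mul (continuous_compContinuous φr)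
  let ι := ContinuousMap.inclusion (closedBall_subset_RHP hr)
  let S : Hinf → (↥RHP →ᵇ ℂ) := fun f => Ψ ((f : ↥RHP →ᵇ ℂ).compContinuous ι)
  have hTS : ∀ f, (T f : ↥RHP →ᵇ ℂ) = S f := fun f => ext (hT f)
  have hS : ∀ f, S f ∈ Hinf := fun f => hTS f ▸ (T f).2
  rw [show T = Set.codRestrict S Hinf hS from funext fun f => Subtype.ext (hTS f)]
  exact ((isCompactOperator_restrict_closedBall hr).continuous_comp hΨ).codRestrict
    hS isClosed_Hinf

lemma one_add_div_one_add_mem_closedBall {z : ℂ} (hz : 0 < z.re) :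
    (1 + z) / (1 + (1 + z)) ∈ closedBall (3 / 4 : ℂ) (1 / 4) := by
  have hne : z + 2 ≠ 0 := ne_zero_of_re_pos (by simp only [add_re, re_ofNat]; linarith)
  rw [show (1 : ℂ) + (1 + z) = z + 2 by ring]
  have hmob : (1 + z) / (z + 2) - 3 / 4 = (z - 2) / (4 * (z + 2)) := by
    field_simp
    ring
  have hle : ‖z - 2‖ ≤ ‖z + 2‖ := by
    rw [← sq_le_sq₀ (norm_nonneg _) (norm_nonneg _), Complex.sq_norm, Complex.sq_norm,
      normSq_apply, normSq_apply]
    simp only [sub_re, sub_im, add_re, add_im, re_ofNat, im_ofNat]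
    nlinarith
  rw [mem_closedBall, dist_eq_norm, hmob, norm_div, norm_mul,
    div_le_iff₀ (mul_pos (by norm_num) (norm_pos_iff.mpr hne))]
  norm_num
  linarith

theorem Ldn_Lup_compact_general (β : ℂ)
    (Lup Ldn : ↥Hinf →L[ℂ] ↥Hinf) (hup : IsLup β Lup) (hdn : IsLdn Ldn) :
    IsCompactOperator ⇑(Ldn ∘L Lup) := by
  let φ : RHP → RHP := fun z => ⟨(1 + z.1) / (1 + (1 + z.1)), mem_div ⟨1 + z.1, mem_shift z⟩⟩
  have hφ : Continuous φ := by
    refine Continuous.subtype_mk (.div (by fun_prop) (by fun_prop) fun z => ?_) _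
    exact ne_zero_of_re_pos (by simp only [add_re, one_re]; linarith [show 0 < z.1.re from z.2])
  refine isCompactOperator_of_eq_mul_comp _ (Ldn (Lup ⟨1, one_mem_Hinf⟩)) hφ (c := 3 / 4)
    (r := 1 / 4) (by norm_num) (fun z => one_add_div_one_add_mem_closedBall z.2) fun f z => ?_
  show (Ldn (Lup f)).1 z = (Ldn (Lup ⟨1, one_mem_Hinf⟩)).1 z * f.1 (φ z)
  rw [hdn, hdn, hup, hup]
  exact (congrArg (· * _) (mul_one _)).symm

/-- (Proposition 4): for every `β` with `Re β ≥ 0`, the product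
`L↓_β L↑_β` is a compact operator on `H^∞(Π)`. -/
theorem Ldn_Lup_compact (β : ℂ) (hβ : 0 ≤ β.re)
    (Lup Ldn : ↥Hinf →L[ℂ] ↥Hinf) (hup : IsLup β Lup) (hdn : IsLdn Ldn) :
    IsCompactOperator ⇑(Ldn ∘L Lup) :=
  Ldn_Lup_compact_general β Lup Ldn hup hdn
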